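/- Let n be even and d ≥ 3, and let ζ be a primitive 2d-th root of unity. For the period matrix M = [p_{i+j}] (rows indexed by I_{(n/2)d-n-2}, columns by I_d, with p as in the linear-cycle case all d_k = 1), the set of rows { M_{φ(j), •} : j ∈ B } is linearly independent over C and spans the row space of M. -/

import Mathlib

/-- The set `Ǐ`. -/
def Icheck (m d : ℕ) : Set (Fin (2*m+2) → ℤ) :=
  {i | (∀ e, 0 ≤ i e ∧ i e ≤ (d : ℤ) - 2) ∧
    ∀ l : ℕ, (hl : l < m+1) → i ⟨2*l, by omega⟩ + i ⟨2*l+1, by omega⟩ = (d : ℤ) - 2}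

/-- The sum of the even-index entries of `i`. -/
def evenSum (m : ℕ) (i : Fin (2*m+2) → ℤ) : ℤ :=
  ∑ e ∈ Finset.univ.filter (fun e : Fin (2*m+2) => Even (e : ℕ)), i e

/-- The set `I_N`. -/
def Iset (m d : ℕ) (N : ℤ) : Set (Fin (2*m+2) → ℤ) :=
  {i | (∀ e, 0 ≤ i e ∧ i e ≤ (d : ℤ) - 2) ∧ ∑ e, i e = N}

/-- The map `φ`. -/
def phiMap (m d : ℕ) (j : Fin (2*m+2) → ℤ) : Fin (2*m+2) → ℤ :=
  fun e => if Even (e : ℕ) then 0 else (d : ℤ) - 2 - j e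

/-- The subset `B` of `I_d` of vectors whose even-index entries vanish. -/
def Bset (m d : ℕ) : Set (Fin (2*m+2) → ℤ) :=
  {j | j ∈ Iset m d (d : ℤ) ∧ ∀ e : Fin (2*m+2), Even (e : ℕ) → j e = 0}

/-! Membership of a nonnegative vector in `Ǐ` only depends on its pair sums `x_{2l} + x_{2l+1}`
(each must equal `d - 2`). So a row `M_i` vanishes as soon as one pair sum of `i` exceeds `d - 2`;
otherwise moving the mass of every pair of `i` to its odd slot gives a vector `i'` with the same
pair sums and no even part, whence `M_i = ζ ^ evenSum i • M_{i'}`, and `i' = φ(j)` with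
`j = φ(i') ∈ B` because `φ` is an involution on vectors with vanishing even entries. Restricted to
the columns in `B`, the rows `M_{φ(j)}`, `j ∈ B`, form an identity matrix. -/

section Indices

variable {m : ℕ}

def evenIdx (l : Fin (m + 1)) : Fin (2 * m + 2) := ⟨2 * l, by omega⟩

def oddIdx (l : Fin (m + 1)) : Fin (2 * m + 2) := ⟨2 * l + 1, by omega⟩

lemma even_evenIdx (l : Fin (m + 1)) : Even (evenIdx l : ℕ) := even_two_mul _

lemma not_even_oddIdx (l : Fin (m + 1)) : ¬ Even (oddIdx l : ℕ) := by
  simp [oddIdx]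

lemma eq_evenIdx_or_eq_oddIdx (e : Fin (2 * m + 2)) :
    ∃ l, e = evenIdx l ∨ e = oddIdx l :=
  ⟨⟨e / 2, by omega⟩, by
    rcases Nat.mod_two_eq_zero_or_one e with h | h
    · exact .inl (Fin.ext (by simp [evenIdx]; omega))
    · exact .inr (Fin.ext (by simp [oddIdx]; omega))⟩

lemma forall_fin_iff_evenIdx_oddIdx {P : Fin (2 * m + 2) → Prop} :
    (∀ e, P e) ↔ ∀ l, P (evenIdx l) ∧ P (oddIdx l) := by
  refine ⟨fun h l => ⟨h _, h _⟩, fun h e => ?_⟩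
  obtain ⟨l, rfl | rfl⟩ := eq_evenIdx_or_eq_oddIdx e
  exacts [(h l).1, (h l).2]

def pairEquiv (m : ℕ) : Fin (m + 1) × Fin 2 ≃ Fin (2 * m + 2) :=
  finProdFinEquiv.trans (finCongr (by ring))

lemma sum_eq_sum_evenIdx_add_oddIdx {M : Type*} [AddCommMonoid M] (f : Fin (2 * m + 2) → M) :
    ∑ e, f e = ∑ l, (f (evenIdx l) + f (oddIdx l)) := by
  rw [← (pairEquiv m).sum_comp, Fintype.sum_prod_type]
  refine Finset.sum_congr rfl fun l _ => ?_
  rw [Fin.sum_univ_two]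
  congr 2 <;> ext <;> simp [pairEquiv, evenIdx, oddIdx, add_comm]

end Indices

section Vectors

variable {m d : ℕ}

def EvenZero (x : Fin (2 * m + 2) → ℤ) : Prop :=
  ∀ e : Fin (2 * m + 2), Even (e : ℕ) → x e = 0

def pairSum (x : Fin (2 * m + 2) → ℤ) (l : Fin (m + 1)) : ℤ :=
  x (evenIdx l) + x (oddIdx l)

lemma pairSum_add (x y : Fin (2 * m + 2) → ℤ) (l : Fin (m + 1)) :
    pairSum (x + y) l = pairSum x l + pairSum y l := by
  simp only [pairSum, Pi.add_apply]; ring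

lemma EvenZero.ext {x y : Fin (2 * m + 2) → ℤ} (hx : EvenZero x) (hy : EvenZero y)
    (h : ∀ l, x (oddIdx l) = y (oddIdx l)) : x = y :=
  funext <| forall_fin_iff_evenIdx_oddIdx.2 fun l =>
    ⟨by rw [hx _ (even_evenIdx l), hy _ (even_evenIdx l)], h l⟩

lemma evenZero_of_mem_Bset {x : Fin (2 * m + 2) → ℤ} (hx : x ∈ Bset m d) : EvenZero x := hx.2

lemma Bset_subset_Iset : Bset m d ⊆ Iset m d d := fun _ hx => hx.1

lemma evenSum_eq_sum_evenIdx (x : Fin (2 * m + 2) → ℤ) :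
    evenSum m x = ∑ l, x (evenIdx l) := by
  rw [evenSum, Finset.sum_filter, sum_eq_sum_evenIdx_add_oddIdx]
  simp [even_evenIdx, not_even_oddIdx]

lemma evenSum_add (x y : Fin (2 * m + 2) → ℤ) :
    evenSum m (x + y) = evenSum m x + evenSum m y := by
  simp [evenSum, Finset.sum_add_distrib]

lemma evenSum_nonneg {x : Fin (2 * m + 2) → ℤ} (hx : 0 ≤ x) : 0 ≤ evenSum m x :=
  Finset.sum_nonneg fun e _ => hx e

lemma EvenZero.evenSum_eq_zero {x : Fin (2 * m + 2) → ℤ} (hx : EvenZero x) :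
    evenSum m x = 0 :=
  Finset.sum_eq_zero fun e he => hx e (Finset.mem_filter.1 he).2

lemma nonneg_of_mem_Iset {x : Fin (2 * m + 2) → ℤ} {N : ℤ} (hx : x ∈ Iset m d N) : 0 ≤ x :=
  fun e => (hx.1 e).1

lemma pairSum_eq_of_mem_Icheck {x : Fin (2 * m + 2) → ℤ} (hx : x ∈ Icheck m d)
    (l : Fin (m + 1)) : pairSum x l = d - 2 :=
  hx.2 l l.2

lemma mem_Icheck_iff_of_nonneg {x : Fin (2 * m + 2) → ℤ} (hx : 0 ≤ x) :
    x ∈ Icheck m d ↔ ∀ l, pairSum x l = d - 2 := by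
  refine ⟨pairSum_eq_of_mem_Icheck, fun h => ⟨?_, fun l hl => h ⟨l, hl⟩⟩⟩
  refine forall_fin_iff_evenIdx_oddIdx.2 fun l => ?_
  have := h l
  have : 0 ≤ x (evenIdx l) := hx _
  have : 0 ≤ x (oddIdx l) := hx _
  simp only [pairSum] at *
  constructor <;> constructor <;> linarith

lemma phiMap_evenIdx (x : Fin (2 * m + 2) → ℤ) (l : Fin (m + 1)) :
    phiMap m d x (evenIdx l) = 0 :=
  if_pos (even_evenIdx l)

lemma phiMap_oddIdx (x : Fin (2 * m + 2) → ℤ) (l : Fin (m + 1)) :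
    phiMap m d x (oddIdx l) = d - 2 - x (oddIdx l) :=
  if_neg (not_even_oddIdx l)

lemma evenZero_phiMap (x : Fin (2 * m + 2) → ℤ) : EvenZero (phiMap m d x) :=
  fun _ he => if_pos he

lemma EvenZero.phiMap_phiMap {x : Fin (2 * m + 2) → ℤ} (hx : EvenZero x) :
    phiMap m d (phiMap m d x) = x :=
  evenZero_phiMap _ |>.ext hx fun l => by simp only [phiMap_oddIdx]; ring

lemma sum_phiMap_add_sum (x : Fin (2 * m + 2) → ℤ) :
    ∑ e, phiMap m d x e + ∑ e, x e = (m + 1) * ((d : ℤ) - 2) + evenSum m x := by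
  simp only [sum_eq_sum_evenIdx_add_oddIdx (phiMap m d x), sum_eq_sum_evenIdx_add_oddIdx x,
    evenSum_eq_sum_evenIdx, phiMap_evenIdx, phiMap_oddIdx, ← Finset.sum_add_distrib]
  simp [Finset.sum_add_distrib, Finset.sum_sub_distrib]
  ring

lemma EvenZero.phiMap_mem_Iset {x : Fin (2 * m + 2) → ℤ} {N N' : ℤ} (hx : EvenZero x)
    (hxI : x ∈ Iset m d N) (hN : N + N' = (m + 1) * ((d : ℤ) - 2)) :
    phiMap m d x ∈ Iset m d N' := by
  refine ⟨forall_fin_iff_evenIdx_oddIdx.2 fun l => ?_, ?_⟩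
  · have := hxI.1 (evenIdx l)
    have := hxI.1 (oddIdx l)
    rw [phiMap_evenIdx, phiMap_oddIdx]
    constructor <;> constructor <;> linarith
  · have := sum_phiMap_add_sum (d := d) x
    rw [hx.evenSum_eq_zero, hxI.2] at this
    linarith

def collapsePairs (x : Fin (2 * m + 2) → ℤ) : Fin (2 * m + 2) → ℤ :=
  fun e => if Even (e : ℕ) then 0 else x ⟨e - 1, by omega⟩ + x e

lemma evenZero_collapsePairs (x : Fin (2 * m + 2) → ℤ) : EvenZero (collapsePairs x) :=
  fun _ he => if_pos he

lemma collapsePairs_oddIdx (x : Fin (2 * m + 2) → ℤ) (l : Fin (m + 1)) :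
    collapsePairs x (oddIdx l) = pairSum x l := by
  rw [collapsePairs, if_neg (not_even_oddIdx l)]
  rfl

lemma pairSum_collapsePairs (x : Fin (2 * m + 2) → ℤ) :
    pairSum (collapsePairs x) = pairSum x := by
  ext l
  rw [pairSum, collapsePairs_oddIdx, evenZero_collapsePairs x _ (even_evenIdx l), zero_add]

lemma collapsePairs_nonneg {x : Fin (2 * m + 2) → ℤ} (hx : 0 ≤ x) : 0 ≤ collapsePairs x :=
  forall_fin_iff_evenIdx_oddIdx.2 fun l => ⟨(evenZero_collapsePairs x _ (even_evenIdx l)).ge,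
    (collapsePairs_oddIdx x l).symm ▸ add_nonneg (hx _) (hx _)⟩

lemma collapsePairs_mem_Iset {x : Fin (2 * m + 2) → ℤ} {N : ℤ} (hx : x ∈ Iset m d N)
    (hpair : ∀ l, pairSum x l ≤ d - 2) : collapsePairs x ∈ Iset m d N := by
  refine ⟨forall_fin_iff_evenIdx_oddIdx.2 fun l => ?_, ?_⟩
  · have := hx.1 (evenIdx l)
    have := hx.1 (oddIdx l)
    rw [evenZero_collapsePairs x _ (even_evenIdx l), collapsePairs_oddIdx]
    have := hpair l
    simp only [pairSum] at *
    constructor <;> constructor <;> linarith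
  · rw [← hx.2, sum_eq_sum_evenIdx_add_oddIdx, sum_eq_sum_evenIdx_add_oddIdx]
    exact Finset.sum_congr rfl fun l _ => congrFun (pairSum_collapsePairs x) l

end Vectors

section Periods

variable {m d : ℕ} {K : Type*} [Field K] (ζ : K) {p : (Fin (2 * m + 2) → ℤ) → K}
  (hp1 : ∀ i ∈ Icheck m d, p i = ζ ^ (evenSum m i)) (hp2 : ∀ i ∉ Icheck m d, p i = 0)
include hp1 hp2

lemma period_add_eq_zpow_mul {x y h : Fin (2 * m + 2) → ℤ} (hx : 0 ≤ x) (hy : 0 ≤ y)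
    (hh : 0 ≤ h) (hxy : pairSum x = pairSum y) (hy0 : evenSum m y = 0) :
    p (x + h) = ζ ^ evenSum m x * p (y + h) := by
  have hmem : x + h ∈ Icheck m d ↔ y + h ∈ Icheck m d := by
    simp only [mem_Icheck_iff_of_nonneg (add_nonneg hx hh),
      mem_Icheck_iff_of_nonneg (add_nonneg hy hh), pairSum_add, hxy]
  by_cases hxh : x + h ∈ Icheck m d
  · have hx0 := evenSum_nonneg hx
    have hh0 := evenSum_nonneg hh
    rw [hp1 _ hxh, hp1 _ (hmem.1 hxh), evenSum_add, evenSum_add, hy0, zero_add,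
      zpow_add' (.inr (by omega))]
  · rw [hp2 _ hxh, hp2 _ (mt hmem.2 hxh), mul_zero]

lemma period_phiMap_add {j h : Fin (2 * m + 2) → ℤ} (hj : j ∈ Bset m d) (hh : h ∈ Bset m d) :
    p (phiMap m d j + h) = if h = j then 1 else 0 := by
  have hj0 := evenZero_of_mem_Bset hj
  have hh0 := evenZero_of_mem_Bset hh
  have hφ : phiMap m d j ∈ Iset m d ((m : ℤ) * d - 2 * m - 2) :=
    hj0.phiMap_mem_Iset hj.1 (by ring)
  have hmem : phiMap m d j + h ∈ Icheck m d ↔ h = j := by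
    rw [mem_Icheck_iff_of_nonneg (add_nonneg (nonneg_of_mem_Iset hφ) (nonneg_of_mem_Iset hh.1))]
    refine ⟨fun H => hh0.ext hj0 fun l => ?_, fun H l => ?_⟩
    · have := H l
      rw [pairSum_add, pairSum, pairSum, phiMap_evenIdx, phiMap_oddIdx,
        hh0 _ (even_evenIdx l)] at this
      linarith
    · rw [H, pairSum_add, pairSum, pairSum, phiMap_evenIdx, phiMap_oddIdx,
        hj0 _ (even_evenIdx l)]
      ring
  split_ifs with hhj
  · rw [hp1 _ (hmem.2 hhj), evenSum_add, (evenZero_phiMap j).evenSum_eq_zero,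
      hh0.evenSum_eq_zero, add_zero, zpow_zero]
  · exact hp2 _ (mt hmem.1 hhj)

variable {row : (Fin (2 * m + 2) → ℤ) → (Iset m d d → K)} (hrow : ∀ i h, row i h = p (i + h.1))
include hrow

omit hp1 in
lemma row_eq_zero_of_lt_pairSum {i : Fin (2 * m + 2) → ℤ} {l : Fin (m + 1)}
    (hl : (d : ℤ) - 2 < pairSum i l) : row i = 0 := by
  ext h
  rw [hrow, Pi.zero_apply, hp2]
  intro hmem
  have := pairSum_eq_of_mem_Icheck hmem l
  have : 0 ≤ pairSum h.1 l := add_nonneg (h.2.1 _).1 (h.2.1 _).1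
  rw [pairSum_add] at *
  linarith

lemma row_eq_zpow_smul_row_collapsePairs {i : Fin (2 * m + 2) → ℤ} (hi : 0 ≤ i) :
    row i = ζ ^ evenSum m i • row (collapsePairs i) := by
  ext h
  rw [Pi.smul_apply, smul_eq_mul, hrow, hrow]
  exact period_add_eq_zpow_mul ζ hp1 hp2 hi (collapsePairs_nonneg hi) (nonneg_of_mem_Iset h.2)
    (pairSum_collapsePairs i).symm (evenZero_collapsePairs i).evenSum_eq_zero

lemma row_mem_span_row_phiMap {N : ℤ} (hN : N + d = (m + 1) * ((d : ℤ) - 2))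
    {i : Fin (2 * m + 2) → ℤ} (hi : i ∈ Iset m d N) :
    row i ∈ Submodule.span K ((fun j => row (phiMap m d j)) '' Bset m d) := by
  by_cases hpair : ∀ l, pairSum i l ≤ d - 2
  · have hc := evenZero_collapsePairs i
    rw [row_eq_zpow_smul_row_collapsePairs ζ hp1 hp2 hrow (nonneg_of_mem_Iset hi),
      ← hc.phiMap_phiMap]
    refine Submodule.smul_mem _ _ (Submodule.subset_span ⟨_, ⟨?_, evenZero_phiMap _⟩, rfl⟩)
    exact hc.phiMap_mem_Iset (collapsePairs_mem_Iset hi hpair) hN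
  · push Not at hpair
    obtain ⟨l, hl⟩ := hpair
    rw [row_eq_zero_of_lt_pairSum hp2 hrow hl]
    exact Submodule.zero_mem _

lemma linearIndependent_row_phiMap :
    LinearIndependent K (fun j : Bset m d => row (phiMap m d j.1)) := by
  classical
  refine LinearIndependent.of_comp (LinearMap.funLeft K K (Set.inclusion Bset_subset_Iset)) ?_
  convert Pi.linearIndependent_single_one (Bset m d) K with j
  ext h
  rw [Function.comp_apply, LinearMap.funLeft_apply, hrow, Pi.single_apply,
    period_phiMap_add ζ hp1 hp2 j.2 h.2]
  exact if_congr Subtype.ext_iff.symm rfl rfl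

end Periods

theorem stmt_11_general (m d : ℕ) (ζ : ℂ)
    (p : (Fin (2*m+2) → ℤ) → ℂ)
    (hp1 : ∀ i ∈ Icheck m d, p i = ζ ^ (evenSum m i))
    (hp2 : ∀ i ∉ Icheck m d, p i = 0)
    (row : (Fin (2*m+2) → ℤ) → (↥(Iset m d (d : ℤ)) → ℂ))
    (hrow : ∀ i h, row i h = p (i + h.1)) :
    LinearIndependent ℂ (fun j : ↥(Bset m d) => row (phiMap m d j.1)) ∧
    Submodule.span ℂ ((fun j => row (phiMap m d j)) '' Bset m d) =
      Submodule.span ℂ (row '' Iset m d ((m : ℤ) * d - 2*m - 2)) := by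
  refine ⟨linearIndependent_row_phiMap ζ hp1 hp2 hrow, le_antisymm ?_ ?_⟩
  · refine Submodule.span_mono (Set.image_subset_iff.2 fun j hj => ⟨phiMap m d j, ?_, rfl⟩)
    exact (evenZero_of_mem_Bset hj).phiMap_mem_Iset hj.1 (by ring)
  · rw [Submodule.span_le]
    rintro _ ⟨i, hi, rfl⟩
    exact row_mem_span_row_phiMap ζ hp1 hp2 hrow (by ring) hi

/-- The rows `M_{φ(j),•}`, `j ∈ B`, of the period matrix are linearly independent and span
its row space. -/
theorem stmt_11 (m d : ℕ) (hd : 3 ≤ d) (ζ : ℂ) (hζ : IsPrimitiveRoot ζ (2*d))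
    (p : (Fin (2*m+2) → ℤ) → ℂ)
    (hp1 : ∀ i ∈ Icheck m d, p i = ζ ^ (evenSum m i))
    (hp2 : ∀ i ∉ Icheck m d, p i = 0)
    (row : (Fin (2*m+2) → ℤ) → (↥(Iset m d (d : ℤ)) → ℂ))
    (hrow : ∀ i h, row i h = p (i + h.1)) :
    LinearIndependent ℂ (fun j : ↥(Bset m d) => row (phiMap m d j.1)) ∧
    Submodule.span ℂ ((fun j => row (phiMap m d j)) '' Bset m d) =
      Submodule.span ℂ (row '' Iset m d ((m : ℤ) * d - 2*m - 2)) :=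
  stmt_11_general m d ζ p hp1 hp2 row hrow
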